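/- For a connected graph G, the family of maximum stable sets of G² equals the family of maximum stable sets of G if and only if G is a complete graph. -/

import Mathlib

/-! If `G` is complete then `G² = G`. Conversely, suppose every maximum stable set of `G` is
stable in `G²`. For such a set `S`, a vertex `x ∈ S` and a neighbour `w` of `x`, the set
`S - x + w` is again a maximum stable set of `G`: a vertex of `S` adjacent to `w` would be at
distance two from `x`. Sliding `x` along a walk towards another vertex `y ∈ S` therefore
eventually makes two vertices of a stable set adjacent, so `α(G) ≤ 1` and `G` is complete. -/

open SimpleGraph

attribute [local instance] Classical.propDecidable

variable {V : Type*}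

/-- A stable (independent) set: pairwise non-adjacent vertices. -/
def IsStable (G : SimpleGraph V) (S : Finset V) : Prop :=
  ∀ ⦃a⦄, a ∈ S → ∀ ⦃b⦄, b ∈ S → ¬ G.Adj a b

/-- The stability (independence) number α(G). -/
noncomputable def alpha [Fintype V] (G : SimpleGraph V) : ℕ :=
  (Finset.univ.powerset.filter (fun S => IsStable G S)).sup Finset.card

/-- A maximum stable set, i.e. a member of Ω(G). -/
def IsMaxStable [Fintype V] (G : SimpleGraph V) (S : Finset V) : Prop :=
  IsStable G S ∧ S.card = alpha G

/-- The square G² of a graph: distinct vertices adjacent iff at distance ≤ 2. -/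
def square (G : SimpleGraph V) : SimpleGraph V where
  Adj u v := u ≠ v ∧ (G.Adj u v ∨ ∃ w, G.Adj u w ∧ G.Adj w v)
  symm := ⟨by
    rintro u v ⟨h, h2⟩
    refine ⟨h.symm, ?_⟩
    rcases h2 with h2 | ⟨w, hw1, hw2⟩
    · exact Or.inl h2.symm
    · exact Or.inr ⟨w, hw2.symm, hw1.symm⟩⟩
  loopless := ⟨by rintro u ⟨h, _⟩; exact h rfl⟩

/-- G is α-square-stable if α(G) = α(G²). -/
def SquareStable [Fintype V] (G : SimpleGraph V) : Prop :=
  alpha G = alpha (square G)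

/-- The maximum matching size μ(G). -/
noncomputable def mu [Fintype V] (G : SimpleGraph V) : ℕ :=
  sSup {n | ∃ M : G.Subgraph, M.IsMatching ∧ M.verts.ncard = 2 * n}

/-- f realizes a matching of A into S: it sends each a ∈ A to a distinct
neighbour in S (so the corresponding edges form a matching ⊆ (A,S) saturating A). -/
def MatchedInto (G : SimpleGraph V) (A S : Finset V) (f : V → V) : Prop :=
  (∀ a ∈ A, f a ∈ S ∧ G.Adj a (f a)) ∧ ∀ a ∈ A, ∀ b ∈ A, f a = f b → a = b

/-- Well-covered: no isolated vertices, and every maximal stable set is maximum. -/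
def WellCovered [Fintype V] (G : SimpleGraph V) : Prop :=
  (∀ v : V, ∃ w, G.Adj v w) ∧
    ∀ S : Finset V, IsStable G S → (∀ T : Finset V, IsStable G T → S ⊆ T → S = T) →
      S.card = alpha G

/-- Very well-covered: well-covered and |V(G)| = 2α(G). -/
def VeryWellCovered [Fintype V] (G : SimpleGraph V) : Prop :=
  WellCovered G ∧ Fintype.card V = 2 * alpha G

/-- The set of pendant (degree-one) vertices of G. -/
noncomputable def pendants [Fintype V] (G : SimpleGraph V) : Finset V :=
  Finset.univ.filter (fun v => G.degree v = 1)

/-- G has a perfect matching consisting of pendant edges. -/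
def HasPendantPerfectMatching [Fintype V] (G : SimpleGraph V) : Prop :=
  ∃ M : G.Subgraph, M.IsPerfectMatching ∧
    ∀ a b : V, M.Adj a b → G.degree a = 1 ∨ G.degree b = 1

/-- The star K_{1,n}: vertex 0 is the center, adjacent to n leaves. -/
def starGraph (n : ℕ) : SimpleGraph (Fin (n + 1)) where
  Adj u v := u ≠ v ∧ (u = 0 ∨ v = 0)
  symm := ⟨by rintro u v ⟨h1, h2⟩; exact ⟨h1.symm, h2.symm⟩⟩
  loopless := ⟨by rintro u ⟨h, _⟩; exact h rfl⟩

lemma le_square (G : SimpleGraph V) : G ≤ square G :=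
  fun _ _ h => ⟨h.ne, Or.inl h⟩

lemma square_eq_self_of_complete {G : SimpleGraph V} (h : ∀ u v : V, u ≠ v → G.Adj u v) :
    square G = G :=
  le_antisymm (fun u v huv => h u v huv.1) (le_square G)

lemma isStable_pair {G : SimpleGraph V} {u v : V} (h : ¬ G.Adj u v) : IsStable G {u, v} := by
  intro a ha b hb hab
  simp only [Finset.mem_insert, Finset.mem_singleton] at ha hb
  rcases ha with rfl | rfl <;> rcases hb with rfl | rfl
  exacts [hab.ne rfl, h hab, h hab.symm, hab.ne rfl]

section Fintype

variable [Fintype V] {G : SimpleGraph V}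

lemma IsStable.card_le_alpha {S : Finset V} (hS : IsStable G S) : S.card ≤ alpha G :=
  Finset.le_sup (by simp [hS])

lemma exists_isMaxStable (G : SimpleGraph V) : ∃ S : Finset V, IsMaxStable G S := by
  have hne : (Finset.univ.powerset.filter (fun S => IsStable G S)).Nonempty :=
    ⟨∅, by simp [IsStable]⟩
  obtain ⟨S, hS, hcard⟩ := Finset.exists_mem_eq_sup _ hne Finset.card
  exact ⟨S, (Finset.mem_filter.mp hS).2, hcard.symm⟩

lemma adj_of_alpha_le_one (h : alpha G ≤ 1) {u v : V} (huv : u ≠ v) : G.Adj u v := by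
  by_contra hadj
  have := (isStable_pair hadj).card_le_alpha
  rw [Finset.card_pair huv] at this
  omega

lemma IsMaxStable.insert_erase {S : Finset V} (hS : IsMaxStable G S)
    (hsq : IsStable (square G) S) {x w : V} (hx : x ∈ S) (hxw : G.Adj x w) :
    IsMaxStable G (insert w (S.erase x)) := by
  have hw : w ∉ S.erase x := fun hw => hsq hx (Finset.mem_of_mem_erase hw) (le_square G hxw)
  refine ⟨?_, ?_⟩
  · have hwb : ∀ b ∈ S.erase x, ¬ G.Adj w b := fun b hb hwb =>
      hsq hx (Finset.mem_of_mem_erase hb) ⟨(Finset.ne_of_mem_erase hb).symm, Or.inr ⟨w, hxw, hwb⟩⟩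
    intro a ha b hb hab
    rcases Finset.mem_insert.mp ha with rfl | haS <;>
      rcases Finset.mem_insert.mp hb with rfl | hbS
    exacts [hab.ne rfl, hwb b hbS hab, hwb a haS hab.symm,
      hS.1 (Finset.mem_of_mem_erase haS) (Finset.mem_of_mem_erase hbS) hab]
  · rw [Finset.card_insert_of_notMem hw, Finset.card_erase_add_one hx, hS.2]

lemma IsMaxStable.eq_of_reachable (hsq : ∀ S, IsMaxStable G S → IsStable (square G) S)
    {S : Finset V} (hS : IsMaxStable G S) {x y : V} (hx : x ∈ S) (hy : y ∈ S)
    (hxy : G.Reachable x y) : x = y := by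
  obtain ⟨p⟩ := hxy
  induction p generalizing S with
  | nil => rfl
  | @cons x w y hxw _ ih =>
    by_contra hne
    have hwy : w ≠ y := by
      rintro rfl
      exact hS.1 hx hy hxw
    exact hwy <| ih (hS.insert_erase (hsq S hS) hx hxw) (Finset.mem_insert_self w _)
      (Finset.mem_insert_of_mem (Finset.mem_erase.mpr ⟨Ne.symm hne, hy⟩))

end Fintype

/-- For a connected graph, Ω(G²) = Ω(G) iff G is complete. -/
theorem stmt7 [Fintype V] (G : SimpleGraph V) (hc : G.Connected) :
    (∀ S : Finset V, IsMaxStable (square G) S ↔ IsMaxStable G S) ↔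
      ∀ u v : V, u ≠ v → G.Adj u v := by
  constructor
  · intro H u v
    apply adj_of_alpha_le_one
    obtain ⟨S, hS⟩ := exists_isMaxStable G
    have hsub : ∀ a ∈ S, ∀ b ∈ S, a = b := fun a ha b hb =>
      hS.eq_of_reachable (fun T hT => ((H T).mpr hT).1) ha hb (hc a b)
    exact hS.2 ▸ Finset.card_le_one.mpr hsub
  · intro hcomp S
    rw [square_eq_self_of_complete hcomp]
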